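/- arXiv:nlin/0108039 — 3 statements merged into one kernel-verified Lean document; each statement's English description precedes it below -/
import Mathlib

section
/- Let Â : [-L, L] × ℝ → ℝ be a smooth solution of Â_tt - σÂ_xx + (αÂ - c_aero∫_{-L}^x Â(y,t)dy)_t + β̃Â = 0 with Neumann boundary conditions Â_x(±L, t) = 0, where σ, α, c_aero > 0 and β̃ = β - c_aero Q₀ρ₀⁻¹A₀⁻¹. Then the energy E(t) = ∫_{-L}^{L} [σÂ_x²/2 + Â_t²/2 + β̃Â²/2] dx satisfies dE/dt = -α∫_{-L}^{L} Â_t² dx + (c_aero/2)(∫_{-L}^{L} Â_t dx)². -/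
open MeasureTheory intervalIntegral Set

/-- partial derivative of `g` in direction `v`. -/
noncomputable def pd (g : ℝ × ℝ → ℝ) (v : ℝ × ℝ) : ℝ × ℝ → ℝ :=
  fun p => fderiv ℝ g p v

lemma pd_contDiff {g : ℝ × ℝ → ℝ} (hg : ContDiff ℝ (⊤ : ℕ∞) g) (v : ℝ × ℝ) :
    ContDiff ℝ (⊤ : ℕ∞) (pd g v) :=
  (hg.fderiv_right (by simp)).clm_apply contDiff_const

lemma pd_hd_snd {g : ℝ × ℝ → ℝ} (hg : ContDiff ℝ (⊤ : ℕ∞) g) (x t : ℝ) :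
    HasDerivAt (fun s => g (x, s)) (pd g (0, 1) (x, t)) t := by
  have h1 : HasDerivAt (fun s : ℝ => ((x, s) : ℝ × ℝ)) (((0 : ℝ), (1 : ℝ))) t :=
    (hasDerivAt_const t x).prodMk (hasDerivAt_id t)
  exact ((hg.differentiable (by simp) (x, t)).hasFDerivAt).comp_hasDerivAt t h1

lemma pd_hd_fst {g : ℝ × ℝ → ℝ} (hg : ContDiff ℝ (⊤ : ℕ∞) g) (x t : ℝ) :
    HasDerivAt (fun y => g (y, t)) (pd g (1, 0) (x, t)) x := by
  have h1 : HasDerivAt (fun y : ℝ => ((y, t) : ℝ × ℝ)) (((1 : ℝ), (0 : ℝ))) x :=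
    (hasDerivAt_id x).prodMk (hasDerivAt_const x t)
  exact ((hg.differentiable (by simp) (x, t)).hasFDerivAt).comp_hasDerivAt x h1

lemma pd_pd_eq {g : ℝ × ℝ → ℝ} (hg : ContDiff ℝ (⊤ : ℕ∞) g) (v w : ℝ × ℝ) (q : ℝ × ℝ) :
    pd (pd g v) w q = fderiv ℝ (fderiv ℝ g) q w v := by
  have hdf : DifferentiableAt ℝ (fderiv ℝ g) q :=
    ((hg.fderiv_right (m := (⊤ : ℕ∞)) (by simp)).differentiable (by simp)) q
  have hcomp : pd g v = (ContinuousLinearMap.apply ℝ ℝ v) ∘ (fderiv ℝ g) := rfl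
  show fderiv ℝ (pd g v) q w = _
  rw [hcomp, fderiv_comp q (ContinuousLinearMap.apply ℝ ℝ v).differentiableAt hdf]
  simp

lemma pd_symm {g : ℝ × ℝ → ℝ} (hg : ContDiff ℝ (⊤ : ℕ∞) g) (v w : ℝ × ℝ) (q : ℝ × ℝ) :
    pd (pd g v) w q = pd (pd g w) v q := by
  rw [pd_pd_eq hg, pd_pd_eq hg]
  exact (hg.contDiffAt.isSymmSndFDerivAt (by rw [minSmoothness_of_isRCLikeNormedField]; exact WithTop.coe_le_coe.mpr le_top)) w v

/-- differentiation under the interval integral sign, continuous version. -/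
lemma hasDerivAt_param_integral {F F' : ℝ × ℝ → ℝ}
    (hF : Continuous F) (hF'c : Continuous F')
    (hder : ∀ x s, HasDerivAt (fun s' => F (x, s')) (F' (x, s)) s)
    (a b t : ℝ) :
    HasDerivAt (fun s => ∫ x in a..b, F (x, s)) (∫ x in a..b, F' (x, t)) t := by
  obtain ⟨C, hC⟩ := (isCompact_uIcc.prod (isCompact_Icc (a := t - 1) (b := t + 1))).exists_bound_of_continuousOn hF'c.continuousOn
  have key := intervalIntegral.hasDerivAt_integral_of_dominated_loc_of_deriv_le
    (F := fun s x => F (x, s)) (F' := fun s x => F' (x, s)) (x₀ := t)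
    (a := a) (b := b) (μ := volume) (bound := fun _ => |C|)
    (s := Metric.ball t 1) (Metric.ball_mem_nhds t one_pos)
    (Filter.Eventually.of_forall fun s =>
      ((hF.comp (continuous_id.prodMk continuous_const)).aestronglyMeasurable))
    ((hF.comp (continuous_id.prodMk continuous_const)).intervalIntegrable a b)
    ((hF'c.comp (continuous_id.prodMk continuous_const)).aestronglyMeasurable)
    (Filter.Eventually.of_forall fun x hx s hs => by
      have hxm : x ∈ uIcc a b := uIoc_subset_uIcc hx
      have hsm : s ∈ Icc (t - 1) (t + 1) := by
        simp only [Metric.mem_ball, Real.dist_eq] at hs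
        constructor <;> [linarith [abs_lt.mp hs]; linarith [abs_lt.mp hs]]
      calc ‖F' (x, s)‖ ≤ C := hC (x, s) (Set.mk_mem_prod hxm hsm)
        _ ≤ |C| := le_abs_self C)
    (intervalIntegrable_const)
    (Filter.Eventually.of_forall fun x _ s _ => hder x s)
  exact key.2

/-- energy identity for the reduced quasi-steady fold equation.
`A x t` is the cross-section perturbation `Â`, `At, Ax, Att, Axx` its partial
derivatives, and `c` is `c_aero`. -/
theorem stmt_8 (L σ α c β Q₀ ρ₀ A₀ βt : ℝ)
    (hL : 0 < L) (hσ : 0 < σ) (hα : 0 < α) (hc : 0 < c)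
    (hβt : βt = β - c * Q₀ * ρ₀⁻¹ * A₀⁻¹)
    (A At Ax Att Axx : ℝ → ℝ → ℝ)
    (hsmooth : ContDiff ℝ (⊤ : ℕ∞) (Function.uncurry A))
    (hAt : ∀ x t, At x t = deriv (fun s => A x s) t)
    (hAx : ∀ x t, Ax x t = deriv (fun y => A y t) x)
    (hAtt : ∀ x t, Att x t = deriv (fun s => At x s) t)
    (hAxx : ∀ x t, Axx x t = deriv (fun y => Ax y t) x)
    (hpde : ∀ x ∈ Set.Icc (-L) L, ∀ t : ℝ,
      Att x t - σ * Axx x t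
        + deriv (fun s => α * A x s - c * ∫ y in (-L)..x, A y s) t
        + βt * A x t = 0)
    (hbc : ∀ t : ℝ, Ax (-L) t = 0 ∧ Ax L t = 0)
    (E : ℝ → ℝ)
    (hE : ∀ t, E t = ∫ x in (-L)..L,
      (σ * (Ax x t) ^ 2 / 2 + (At x t) ^ 2 / 2 + βt * (A x t) ^ 2 / 2)) :
    ∀ t : ℝ, deriv E t
      = -α * (∫ x in (-L)..L, (At x t) ^ 2)
        + (c / 2) * (∫ x in (-L)..L, At x t) ^ 2 := by
  intro t
  set u : ℝ × ℝ → ℝ := Function.uncurry A with hu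
  have hus : ContDiff ℝ (⊤ : ℕ∞) u := hsmooth
  have s1 : ContDiff ℝ (⊤ : ℕ∞) (pd u (1,0)) := pd_contDiff hus _
  have s2 : ContDiff ℝ (⊤ : ℕ∞) (pd u (0,1)) := pd_contDiff hus _
  have s11 : ContDiff ℝ (⊤ : ℕ∞) (pd (pd u (1,0)) (1,0)) := pd_contDiff s1 _
  have s22 : ContDiff ℝ (⊤ : ℕ∞) (pd (pd u (0,1)) (0,1)) := pd_contDiff s2 _
  have s12 : ContDiff ℝ (⊤ : ℕ∞) (pd (pd u (1,0)) (0,1)) := pd_contDiff s1 _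
  -- identification of the given partial derivatives
  have eA : ∀ x s, A x s = u (x,s) := fun _ _ => rfl
  have eAt : ∀ x s, At x s = pd u (0,1) (x,s) := fun x s => by
    rw [hAt]; exact (pd_hd_snd hus x s).deriv
  have eAx : ∀ x s, Ax x s = pd u (1,0) (x,s) := fun x s => by
    rw [hAx]; exact (pd_hd_fst hus x s).deriv
  have gAt : ∀ s, (fun x => At x s) = fun x => pd u (0,1) (x,s) :=
    fun s => funext fun x => eAt x s
  have gAx : ∀ s, (fun x => Ax x s) = fun x => pd u (1,0) (x,s) :=
    fun s => funext fun x => eAx x s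
  have fAt : ∀ x, (fun s => At x s) = fun s => pd u (0,1) (x,s) :=
    fun x => funext fun s => eAt x s
  have eAtt : ∀ x s, Att x s = pd (pd u (0,1)) (0,1) (x,s) := fun x s => by
    rw [hAtt, fAt x]; exact (pd_hd_snd s2 x s).deriv
  have eAxx : ∀ x s, Axx x s = pd (pd u (1,0)) (1,0) (x,s) := fun x s => by
    rw [hAxx, gAx s]; exact (pd_hd_fst s1 x s).deriv
  -- continuity at fixed t
  have cxt : Continuous (fun x : ℝ => ((x, t) : ℝ × ℝ)) := continuous_id.prodMk continuous_const
  have cAt : Continuous (fun x => At x t) := by rw [gAt t]; exact s2.continuous.comp cxt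
  have cAx : Continuous (fun x => Ax x t) := by rw [gAx t]; exact s1.continuous.comp cxt
  have cAxx : Continuous (fun x => Axx x t) := by
    have h : (fun x => Axx x t) = fun x => pd (pd u (1,0)) (1,0) (x,t) := funext fun x => eAxx x t
    rw [h]; exact s11.continuous.comp cxt
  have cM : Continuous (fun x => pd (pd u (1,0)) (0,1) (x,t)) := s12.continuous.comp cxt
  -- time derivative of A
  have hdA : ∀ x s, HasDerivAt (fun s' => A x s') (At x s) s := fun x s => by
    rw [eAt]; exact pd_hd_snd hus x s
  -- derivative of E
  have hEfun : E = fun s => ∫ x in (-L)..L,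
      (σ * (pd u (1,0) (x,s))^2/2 + (pd u (0,1) (x,s))^2/2 + βt * (u (x,s))^2/2) := by
    funext s
    rw [hE s]
    congr 1
    funext x
    rw [eAx, eAt]
    rfl
  have hcontF : Continuous (fun p : ℝ × ℝ =>
      σ * (pd u (1,0) p)^2/2 + (pd u (0,1) p)^2/2 + βt * (u p)^2/2) :=
    (((continuous_const.mul (s1.continuous.pow 2)).div_const 2).add
      ((s2.continuous.pow 2).div_const 2)).add
      ((continuous_const.mul (hus.continuous.pow 2)).div_const 2)
  have hcontF' : Continuous (fun p : ℝ × ℝ =>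
      σ * (pd u (1,0) p * pd (pd u (1,0)) (0,1) p)
      + pd u (0,1) p * pd (pd u (0,1)) (0,1) p
      + βt * (u p * pd u (0,1) p)) :=
    ((continuous_const.mul (s1.continuous.mul s12.continuous)).add
      (s2.continuous.mul s22.continuous)).add
      (continuous_const.mul (hus.continuous.mul s2.continuous))
  have hder : ∀ x s, HasDerivAt
      (fun s' => σ * (pd u (1,0) (x,s'))^2/2 + (pd u (0,1) (x,s'))^2/2 + βt * (u (x,s'))^2/2)
      (σ * (pd u (1,0) (x,s) * pd (pd u (1,0)) (0,1) (x,s))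
        + pd u (0,1) (x,s) * pd (pd u (0,1)) (0,1) (x,s)
        + βt * (u (x,s) * pd u (0,1) (x,s))) s := by
    intro x s
    have h1 := pd_hd_snd s1 x s
    have h2 := pd_hd_snd s2 x s
    have h0 := pd_hd_snd hus x s
    have H := ((((h1.pow 2).const_mul σ).div_const 2).add
      ((h2.pow 2).div_const 2)).add (((h0.pow 2).const_mul βt).div_const 2)
    refine H.congr_deriv ?_
    rw [show (2:ℕ) - 1 = 1 from rfl]; push_cast
    ring
  have hE' : HasDerivAt E (∫ x in (-L)..L,
      (σ * (pd u (1,0) (x,t) * pd (pd u (1,0)) (0,1) (x,t))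
      + pd u (0,1) (x,t) * pd (pd u (0,1)) (0,1) (x,t)
      + βt * (u (x,t) * pd u (0,1) (x,t)))) t := by
    rw [hEfun]
    exact hasDerivAt_param_integral hcontF hcontF' hder (-L) L t
  -- the PDE, solved for Att
  have hpde' : ∀ x ∈ Set.Icc (-L) L,
      Att x t = σ * Axx x t - α * At x t + c * (∫ y in (-L)..x, At y t) - βt * A x t := by
    intro x hx
    have hint : HasDerivAt (fun s => ∫ y in (-L)..x, A y s) (∫ y in (-L)..x, At y t) t := by
      simp only [eAt]
      exact hasDerivAt_param_integral hus.continuous s2.continuous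
        (fun y s => pd_hd_snd hus y s) (-L) x t
    have hcomb : HasDerivAt (fun s => α * A x s - c * ∫ y in (-L)..x, A y s)
        (α * At x t - c * ∫ y in (-L)..x, At y t) t :=
      ((hdA x t).const_mul α).sub (hint.const_mul c)
    have hp := hpde x hx t
    rw [hcomb.deriv] at hp
    linarith
  -- FTC for the primitive of At
  have hG : ∀ x : ℝ, HasDerivAt (fun x' => ∫ y in (-L)..x', At y t) (At x t) x :=
    fun x => (cAt.integral_hasStrictDerivAt (-L) x).hasDerivAt
  have cG : Continuous (fun x => ∫ y in (-L)..x, At y t) :=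
    continuous_iff_continuousAt.mpr fun x => (hG x).continuousAt
  -- rewrite the integrand using the PDE
  have hIeq : (∫ x in (-L)..L,
      (σ * (pd u (1,0) (x,t) * pd (pd u (1,0)) (0,1) (x,t))
      + pd u (0,1) (x,t) * pd (pd u (0,1)) (0,1) (x,t)
      + βt * (u (x,t) * pd u (0,1) (x,t))))
      = ∫ x in (-L)..L,
      (σ * (Axx x t * At x t + Ax x t * pd (pd u (1,0)) (0,1) (x,t))
      + (-α) * (At x t)^2 + c * (At x t * ∫ y in (-L)..x, At y t)) := by
    apply intervalIntegral.integral_congr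
    intro x hx
    rw [Set.uIcc_of_le (by linarith : -L ≤ L)] at hx
    have hp := hpde' x hx
    simp only [eAt, eAx, eAtt, eAxx, eA] at hp ⊢
    rw [hp]
    ring
  -- integrability of the pieces
  have i1 : IntervalIntegrable
      (fun x => Axx x t * At x t + Ax x t * pd (pd u (1,0)) (0,1) (x,t)) volume (-L) L :=
    ((cAxx.mul cAt).add (cAx.mul cM)).intervalIntegrable _ _
  have i2 : IntervalIntegrable (fun x => (At x t)^2) volume (-L) L :=
    (cAt.pow 2).intervalIntegrable _ _
  have i3 : IntervalIntegrable (fun x => At x t * ∫ y in (-L)..x, At y t) volume (-L) L :=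
    (cAt.mul cG).intervalIntegrable _ _
  have hsplit : (∫ x in (-L)..L,
      (σ * (Axx x t * At x t + Ax x t * pd (pd u (1,0)) (0,1) (x,t))
      + (-α) * (At x t)^2 + c * (At x t * ∫ y in (-L)..x, At y t)))
      = σ * (∫ x in (-L)..L, (Axx x t * At x t + Ax x t * pd (pd u (1,0)) (0,1) (x,t)))
      + (-α) * (∫ x in (-L)..L, (At x t)^2)
      + c * (∫ x in (-L)..L, (At x t * ∫ y in (-L)..x, At y t)) := by
    rw [intervalIntegral.integral_add ((i1.const_mul σ).add (i2.const_mul (-α))) (i3.const_mul c),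
      intervalIntegral.integral_add (i1.const_mul σ) (i2.const_mul (-α)),
      intervalIntegral.integral_const_mul, intervalIntegral.integral_const_mul,
      intervalIntegral.integral_const_mul]
  -- integration by parts term
  have hpart : (∫ x in (-L)..L, (Axx x t * At x t + Ax x t * pd (pd u (1,0)) (0,1) (x,t)))
      = Ax L t * At L t - Ax (-L) t * At (-L) t := by
    apply intervalIntegral.integral_eq_sub_of_hasDerivAt
    · intro x _
      have h1 : HasDerivAt (fun y => Ax y t) (Axx x t) x := by
        rw [gAx t, eAxx]; exact pd_hd_fst s1 x t
      have h2 : HasDerivAt (fun y => At y t) (pd (pd u (1,0)) (0,1) (x,t)) x := by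
        rw [gAt t]
        have h := pd_hd_fst s2 x t
        rwa [pd_symm hus (0,1) (1,0) (x,t)] at h
      exact h1.mul h2
    · exact i1
  -- square term
  have hsq : (∫ x in (-L)..L, (At x t * ∫ y in (-L)..x, At y t))
      = (∫ y in (-L)..L, At y t)^2/2 := by
    have key : ∀ x ∈ Set.uIcc (-L) L,
        HasDerivAt (fun x' => (∫ y in (-L)..x', At y t)^2/2)
          (At x t * ∫ y in (-L)..x, At y t) x := by
      intro x _
      have h := ((hG x).pow 2).div_const 2
      refine h.congr_deriv ?_
      rw [show (2:ℕ) - 1 = 1 from rfl]; push_cast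
      ring
    rw [intervalIntegral.integral_eq_sub_of_hasDerivAt key i3, intervalIntegral.integral_same]
    ring
  rw [hE'.deriv, hIeq, hsplit, hpart, hsq, (hbc t).1, (hbc t).2]
  ring
end

section
/- Under the hypotheses of the energy identity (σ, α, c_aero > 0, β̃ > 0, Neumann boundary conditions Â_x(±L,t) = 0), if additionally α ≥ L·c_aero, then dE/dt ≤ 0 for all t (using Cauchy–Schwarz, (∫_{-L}^{L} Â_t dx)² ≤ 2L∫_{-L}^{L} Â_t² dx); i.e. the energy E(t) is nonincreasing. -/
-- Cauchy-Schwarz for interval integrals, elementary proof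
lemma cs_interval {L : ℝ} (hL : 0 < L) (f : ℝ → ℝ) (hf : Continuous f) :
    (∫ x in (-L)..L, f x) ^ 2 ≤ 2 * L * ∫ x in (-L)..L, (f x) ^ 2 := by
  have hle : (-L : ℝ) ≤ L := by linarith
  set I := ∫ x in (-L)..L, f x with hI
  set J := ∫ x in (-L)..L, (f x) ^ 2 with hJ
  have hif : IntervalIntegrable f MeasureTheory.volume (-L) L := hf.intervalIntegrable _ _
  have hif2 : IntervalIntegrable (fun x => (f x) ^ 2) MeasureTheory.volume (-L) L :=
    (hf.pow 2).intervalIntegrable _ _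
  have expand : ∀ x : ℝ, (2 * L * f x - I) ^ 2
      = (4 * L ^ 2) * (f x) ^ 2 - (4 * L * I) * f x + I ^ 2 := by intro x; ring
  have hnn : 0 ≤ ∫ x in (-L)..L, (2 * L * f x - I) ^ 2 :=
    intervalIntegral.integral_nonneg hle (fun x _ => sq_nonneg _)
  have hval : (∫ x in (-L)..L, (2 * L * f x - I) ^ 2)
      = (4 * L ^ 2) * J - (4 * L * I) * I + I ^ 2 * (2 * L) := by
    have : (∫ x in (-L)..L, (2 * L * f x - I) ^ 2)
        = ∫ x in (-L)..L, ((4 * L ^ 2) * (f x) ^ 2 - (4 * L * I) * f x + I ^ 2) := by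
      simp only [expand]
    rw [this, intervalIntegral.integral_add, intervalIntegral.integral_sub,
      intervalIntegral.integral_const_mul, intervalIntegral.integral_const_mul,
      intervalIntegral.integral_const]
    · simp only [smul_eq_mul, ← hI, ← hJ]; ring
    · exact hif2.const_mul _
    · exact hif.const_mul _
    · exact (hif2.const_mul _).sub (hif.const_mul _)
    · exact intervalIntegrable_const
  rw [hval] at hnn
  nlinarith [mul_pos hL hL, sq_nonneg I, sq_nonneg L]

/-- under the hypotheses of the energy identity, if
`α ≥ L * c_aero` then the energy is nonincreasing (by Cauchy–Schwarz,
`(∫ Ât)² ≤ 2L ∫ Ât²`). -/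
theorem stmt_9 (L σ α c β Q₀ ρ₀ A₀ βt : ℝ)
    (hL : 0 < L) (hσ : 0 < σ) (hα : 0 < α) (hc : 0 < c) (hβtpos : 0 < βt)
    (hβt : βt = β - c * Q₀ * ρ₀⁻¹ * A₀⁻¹)
    (A At Ax Att Axx : ℝ → ℝ → ℝ)
    (hsmooth : ContDiff ℝ (⊤ : ℕ∞) (Function.uncurry A))
    (hAt : ∀ x t, At x t = deriv (fun s => A x s) t)
    (hAx : ∀ x t, Ax x t = deriv (fun y => A y t) x)
    (hAtt : ∀ x t, Att x t = deriv (fun s => At x s) t)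
    (hAxx : ∀ x t, Axx x t = deriv (fun y => Ax y t) x)
    (hpde : ∀ x ∈ Set.Icc (-L) L, ∀ t : ℝ,
      Att x t - σ * Axx x t
        + deriv (fun s => α * A x s - c * ∫ y in (-L)..x, A y s) t
        + βt * A x t = 0)
    (hbc : ∀ t : ℝ, Ax (-L) t = 0 ∧ Ax L t = 0)
    (E : ℝ → ℝ)
    (hE : ∀ t, E t = ∫ x in (-L)..L,
      (σ * (Ax x t) ^ 2 / 2 + (At x t) ^ 2 / 2 + βt * (A x t) ^ 2 / 2))
    (hEid : ∀ t : ℝ, deriv E t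
      = -α * (∫ x in (-L)..L, (At x t) ^ 2)
        + (c / 2) * (∫ x in (-L)..L, At x t) ^ 2)
    (hth : α ≥ L * c) :
    (∀ t : ℝ, (∫ x in (-L)..L, At x t) ^ 2 ≤ 2 * L * ∫ x in (-L)..L, (At x t) ^ 2) ∧
    (∀ t : ℝ, deriv E t ≤ 0) ∧ Antitone E := by
  set g := Function.uncurry A with hgdef
  have hgdiff : Differentiable ℝ g := hsmooth.differentiable (by simp)
  have hDg : ContDiff ℝ (⊤ : ℕ∞) (fderiv ℝ g) := hsmooth.fderiv_right (by simp)
  set at2 : ℝ × ℝ → ℝ := fun p => fderiv ℝ g p (0, 1) with hat2def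
  set ax2 : ℝ × ℝ → ℝ := fun p => fderiv ℝ g p (1, 0) with hax2def
  have hat2 : ContDiff ℝ (⊤ : ℕ∞) at2 := hDg.clm_apply contDiff_const
  have hax2 : ContDiff ℝ (⊤ : ℕ∞) ax2 := hDg.clm_apply contDiff_const
  -- At and Ax in terms of at2, ax2
  have keyt : ∀ x t : ℝ, HasDerivAt (fun s => A x s) (at2 (x, t)) t := by
    intro x t
    have h1 : HasDerivAt (fun s : ℝ => (x, s)) ((0 : ℝ), (1 : ℝ)) t :=
      (hasDerivAt_const t x).prodMk (hasDerivAt_id t)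
    exact (hgdiff (x, t)).hasFDerivAt.comp_hasDerivAt t h1
  have keyx : ∀ x t : ℝ, HasDerivAt (fun y => A y t) (ax2 (x, t)) x := by
    intro x t
    have h1 : HasDerivAt (fun y : ℝ => (y, t)) ((1 : ℝ), (0 : ℝ)) x :=
      (hasDerivAt_id x).prodMk (hasDerivAt_const x t)
    exact (hgdiff (x, t)).hasFDerivAt.comp_hasDerivAt x h1
  have hAt2 : ∀ x t : ℝ, At x t = at2 (x, t) := fun x t => by
    rw [hAt x t]; exact (keyt x t).deriv
  have hAx2 : ∀ x t : ℝ, Ax x t = ax2 (x, t) := fun x t => by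
    rw [hAx x t]; exact (keyx x t).deriv
  -- Cauchy–Schwarz part
  have hCS : ∀ t : ℝ, (∫ x in (-L)..L, At x t) ^ 2
      ≤ 2 * L * ∫ x in (-L)..L, (At x t) ^ 2 := by
    intro t
    have hfc : Continuous (fun x => At x t) := by
      have : Continuous (fun x : ℝ => at2 (x, t)) :=
        hat2.continuous.comp (continuous_id.prodMk continuous_const)
      simpa [funext fun x => hAt2 x t] using this
    exact cs_interval hL (fun x => At x t) hfc
  -- deriv E ≤ 0
  have hderiv_nonpos : ∀ t : ℝ, deriv E t ≤ 0 := by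
    intro t
    rw [hEid t]
    have h2 : 0 ≤ ∫ x in (-L)..L, (At x t) ^ 2 :=
      intervalIntegral.integral_nonneg (by linarith) (fun x _ => sq_nonneg _)
    nlinarith [hCS t]
  -- differentiability of E
  set G : ℝ × ℝ → ℝ := fun q =>
    σ * (ax2 (q.2, q.1)) ^ 2 / 2 + (at2 (q.2, q.1)) ^ 2 / 2 + βt * (g (q.2, q.1)) ^ 2 / 2
    with hGdef
  have hswap : ContDiff ℝ (⊤ : ℕ∞) (fun q : ℝ × ℝ => (q.2, q.1)) := contDiff_snd.prodMk contDiff_fst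
  have hG : ContDiff ℝ (⊤ : ℕ∞) G := by
    apply ContDiff.add
    apply ContDiff.add
    · exact ((contDiff_const.mul ((hax2.comp hswap).pow 2)).div_const 2)
    · exact (((hat2.comp hswap).pow 2).div_const 2)
    · exact ((contDiff_const.mul ((hsmooth.comp hswap).pow 2)).div_const 2)
  set G' : ℝ × ℝ → ℝ := fun q => fderiv ℝ G q (1, 0) with hG'def
  have hG'cont : Continuous G' :=
    (((hG.fderiv_right (m := (⊤ : ℕ∞)) (by simp))).clm_apply contDiff_const).continuous
  have keyG : ∀ t x : ℝ, HasDerivAt (fun t' => G (t', x)) (G' (t, x)) t := by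
    intro t x
    have h1 : HasDerivAt (fun t' : ℝ => (t', x)) ((1 : ℝ), (0 : ℝ)) t :=
      (hasDerivAt_id t).prodMk (hasDerivAt_const t x)
    exact ((hG.differentiable (by simp)) (t, x)).hasFDerivAt.comp_hasDerivAt t h1
  have hEG : ∀ t, E t = ∫ x in (-L)..L, G (t, x) := by
    intro t
    rw [hE t]
    apply intervalIntegral.integral_congr
    intro x _
    simp only [hGdef, hAt2 x t, hAx2 x t]
    rfl
  have hEfun : E = fun t => ∫ x in (-L)..L, G (t, x) := funext hEG
  have hdiffE : Differentiable ℝ E := by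
    intro t₀
    -- bound on a compact neighborhood
    obtain ⟨M, hM⟩ := (IsCompact.exists_bound_of_continuousOn
      ((isCompact_Icc (a := t₀ - 1) (b := t₀ + 1)).prod (isCompact_Icc (a := -L) (b := L)))
      hG'cont.continuousOn)
    have hle : (-L : ℝ) ≤ L := by linarith
    have main := intervalIntegral.hasDerivAt_integral_of_dominated_loc_of_deriv_le
      (F := fun t x => G (t, x)) (F' := fun t x => G' (t, x)) (x₀ := t₀)
      (a := -L) (b := L) (μ := MeasureTheory.volume) (bound := fun _ => M)
      (s := Metric.ball t₀ 1) (Metric.ball_mem_nhds t₀ one_pos)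
      (Filter.Eventually.of_forall fun t =>
        ((hG.continuous.comp (continuous_const.prodMk continuous_id)).aestronglyMeasurable))
      ((hG.continuous.comp (continuous_const.prodMk continuous_id)).intervalIntegrable _ _)
      ((hG'cont.comp (continuous_const.prodMk continuous_id)).aestronglyMeasurable)
      (Filter.Eventually.of_forall fun x hx t ht => by
        apply hM
        constructor
        · have := Metric.mem_ball.mp ht
          rw [Real.dist_eq] at this
          constructor <;> [linarith [abs_lt.mp this]; linarith [abs_lt.mp this]]
        · rw [Set.uIoc_of_le hle] at hx
          exact ⟨le_of_lt hx.1, hx.2⟩)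
      intervalIntegrable_const
      (Filter.Eventually.of_forall fun x _ t _ => keyG t x)
    rw [hEfun]
    exact main.2.differentiableAt
  exact ⟨hCS, hderiv_nonpos, antitone_of_deriv_nonpos hdiffE hderiv_nonpos⟩
end

section
/- Consider the damped oscillator m ĥ'' + r ĥ' + k ĥ = P_g with P_g = 2τP_s ĥ'/(h₀ + ĥ + τĥ'), m, r, k, τ, P_s, h₀ > 0. Linearizing P_g about ĥ = 0, ĥ' = 0 gives P_g ≈ (2τP_s/h₀)ĥ', so the linearized equation is m ĥ'' + (r - 2τP_s/h₀)ĥ' + k ĥ = 0, and the zero solution of the linearized equation loses asymptotic stability (effective damping becomes zero) exactly when P_s = h₀r/(2τ). -/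
/-!
The derivative of the quotient `2τP_s ĥ' / (h₀ + ĥ + τĥ')` at the origin only sees the numerator,
because the numerator vanishes there. For the linearized oscillator, the characteristic polynomial
`m z² + b z + k` with `m, k > 0` has both roots in the open left half plane iff `b > 0`: the roots sum
to `-b/m`, and conversely a root `z` with `Re z ≥ 0` would give
`0 = Re (m z + b + k z⁻¹) ≥ b`.
-/

open Complex

theorem HasFDerivAt.div_of_eq_zero {𝕜 E : Type*} [NontriviallyNormedField 𝕜]
    [NormedAddCommGroup E] [NormedSpace 𝕜 E] {f g : E → 𝕜} {f' : E →L[𝕜] 𝕜} {x : E}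
    (hf : HasFDerivAt f f' x) (hg : DifferentiableAt 𝕜 g x) (hfx : f x = 0) (hgx : g x ≠ 0) :
    HasFDerivAt (fun y => f y / g y) ((g x)⁻¹ • f') x := by
  have h := (hg.inv hgx).hasFDerivAt.smul hf
  rw [hfx, ContinuousLinearMap.smulRight_zero, add_zero] at h
  have hquot : (fun y => f y / g y) = g⁻¹ • f := by
    ext y
    simp only [smul_eq_mul, Pi.mul_apply, Pi.inv_apply, div_eq_inv_mul]
  rw [hquot]
  exact h

theorem pos_of_forall_quadratic_root_re_neg {a b c : ℝ} (ha : 0 < a)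
    (h : ∀ z : ℂ, (a : ℂ) * z ^ 2 + (b : ℂ) * z + (c : ℂ) = 0 → z.re < 0) : 0 < b := by
  obtain ⟨s, hs⟩ := IsAlgClosed.exists_eq_mul_self (discrim (a : ℂ) b c)
  have ha' : (a : ℂ) ≠ 0 := ofReal_ne_zero.mpr ha.ne'
  have hroot (z : ℂ) (hz : z = (-b + s) / (2 * a) ∨ z = (-b - s) / (2 * a)) : z.re < 0 :=
    h z (by rw [sq]; exact (quadratic_eq_zero_iff ha' hs z).mpr hz)
  have hsum : (-b + s) / (2 * a) + (-b - s) / (2 * a) = ((-b / a : ℝ) : ℂ) := by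
    push_cast
    field_simp
    ring
  have hre := add_neg (hroot _ (.inl rfl)) (hroot _ (.inr rfl))
  rwa [← add_re, hsum, ofReal_re, neg_div, neg_lt_zero, div_pos_iff_of_pos_right ha] at hre

theorem quadratic_root_re_neg {a b c : ℝ} (ha : 0 ≤ a) (hb : 0 < b) (hc : 0 < c) {z : ℂ}
    (hz : (a : ℂ) * z ^ 2 + (b : ℂ) * z + (c : ℂ) = 0) : z.re < 0 := by
  have hz0 : z ≠ 0 := by
    rintro rfl
    simp [hc.ne'] at hz
  have hdiv : (a : ℂ) * z + b + c * z⁻¹ = 0 := by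
    field_simp
    linear_combination hz
  have hre := congrArg re hdiv
  simp only [add_re, re_ofReal_mul, ofReal_re, inv_re, zero_re] at hre
  by_contra! hzre
  linarith [mul_nonneg ha hzre, mul_nonneg hc.le (div_nonneg hzre (normSq_nonneg z))]

theorem forall_quadratic_root_re_neg_iff {a b c : ℝ} (ha : 0 < a) (hc : 0 < c) :
    (∀ z : ℂ, (a : ℂ) * z ^ 2 + (b : ℂ) * z + (c : ℂ) = 0 → z.re < 0) ↔ 0 < b :=
  ⟨pos_of_forall_quadratic_root_re_neg ha, fun hb _ => quadratic_root_re_neg ha.le hb hc⟩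

theorem stmt_12_general (m r k τ P_s h₀ : ℝ)
    (hm : 0 < m) (hk : 0 < k) (hτ : 0 < τ) (hh : 0 < h₀) :
    (∀ p : ℝ × ℝ,
      fderiv ℝ (fun q : ℝ × ℝ => 2 * τ * P_s * q.2 / (h₀ + q.1 + τ * q.2)) (0, 0) p
        = (2 * τ * P_s / h₀) * p.2) ∧
    (r - 2 * τ * P_s / h₀ = 0 ↔ P_s = h₀ * r / (2 * τ)) ∧
    ((∀ z : ℂ, (m : ℂ) * z ^ 2 + ((r - 2 * τ * P_s / h₀ : ℝ) : ℂ) * z + (k : ℂ) = 0 →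
        z.re < 0) ↔ P_s < h₀ * r / (2 * τ)) := by
  have h2τ : 0 < 2 * τ := by positivity
  refine ⟨fun p => ?_, ?_, ?_⟩
  · have hnum : HasFDerivAt (fun q : ℝ × ℝ => 2 * τ * P_s * q.2)
        ((2 * τ * P_s) • ContinuousLinearMap.snd ℝ ℝ ℝ) (0, 0) :=
      hasFDerivAt_snd.const_mul _
    have hden : DifferentiableAt ℝ (fun q : ℝ × ℝ => h₀ + q.1 + τ * q.2) (0, 0) := by fun_prop
    rw [(hnum.div_of_eq_zero hden (by simp) (by simpa using hh.ne')).fderiv]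
    simp only [smul_apply, ContinuousLinearMap.coe_snd', smul_eq_mul, add_zero,
      mul_zero]
    field_simp
  · rw [sub_eq_zero, eq_div_iff hh.ne', eq_div_iff h2τ.ne']
    constructor <;> intro h <;> linarith
  · rw [forall_quadratic_root_re_neg_iff hm hk, sub_pos, div_lt_iff₀ hh, lt_div_iff₀ h2τ]
    constructor <;> intro h <;> linarith

/-- linearization of the Titze driving pressure and the
threshold subglottal pressure. The driving force is
`P_g(h, v) = 2 τ P_s v / (h₀ + h + τ v)`; its linearization at `(0,0)` is
`(h, v) ↦ (2 τ P_s / h₀) v`, and the zero solution of the linearized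
oscillator `m h'' + (r - 2 τ P_s / h₀) h' + k h = 0` is asymptotically stable
(all characteristic roots in the open left half plane) exactly for
`P_s < h₀ r / (2τ)`, the effective damping vanishing exactly at
`P_s = h₀ r / (2τ)`. -/
theorem stmt_12 (m r k τ P_s h₀ : ℝ)
    (hm : 0 < m) (hr : 0 < r) (hk : 0 < k) (hτ : 0 < τ) (hP : 0 < P_s) (hh : 0 < h₀) :
    (∀ p : ℝ × ℝ,
      fderiv ℝ (fun q : ℝ × ℝ => 2 * τ * P_s * q.2 / (h₀ + q.1 + τ * q.2)) (0, 0) p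
        = (2 * τ * P_s / h₀) * p.2) ∧
    (r - 2 * τ * P_s / h₀ = 0 ↔ P_s = h₀ * r / (2 * τ)) ∧
    ((∀ z : ℂ, (m : ℂ) * z ^ 2 + ((r - 2 * τ * P_s / h₀ : ℝ) : ℂ) * z + (k : ℂ) = 0 →
        z.re < 0) ↔ P_s < h₀ * r / (2 * τ)) :=
  stmt_12_general m r k τ P_s h₀ hm hk hτ hh
end
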